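/- Let w₁,…,w_m ∈ Σ* be finite words and let L be the disjoint union of their linear LTSs L_{w_i}, each state of L_{w_i} labeled with p_i. For the formula φ^m_LCSS := νX. (⋀_{i=1}^m p_i(x_i)) ∧ ⋁_{a∈Σ} ⟨a⟩_{x_1}⟨-⟩_{x_1}* … ⟨a⟩_{x_m}⟨-⟩_{x_m}* X, where ⟨-⟩_{x_i}*ψ := μY. ψ ∨ ⋁_{a∈Σ}⟨a⟩_{x_i} Y, consider the descending approximation F⁰ = all valuations, F^{j+1} = ⟦(⋀_i p_i(x_i)) ∧ ⋁_{a∈Σ} ⟨a⟩_{x_1}⟨-⟩_{x_1}*…⟨a⟩_{x_m}⟨-⟩_{x_m}* X⟧^{[X↦F^j]}. Then a valuation v with v(x_i) = position h_i of L_{w_i} belongs to F^{j} (j ≥ 1) if and only if there is a word u of length j that is a common subsequence of the suffixes of w₁,…,w_m starting after positions h₁,…,h_m respectively with first letter at positions h_i+1; in particular some F^{j} with j maximal nonempty identifies the length of the longest common subsequence of w₁,…,w_m. -/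

import Mathlib

/-- A labeled transition system over edge labels `Λ` and atomic propositions `P`. -/
structure LTS (Λ P : Type) where
  S : Type
  s0 : S
  Tr : S → Λ → S → Prop
  rho : S → Set P

/-- Formulas of the higher-dimensional modal μ-calculus Lμω. -/
inductive Formula (Λ P V V2 : Type) : Type
  | prop : P → V → Formula Λ P V V2
  | svar : V2 → Formula Λ P V V2
  | neg : Formula Λ P V V2 → Formula Λ P V V2
  | and : Formula Λ P V V2 → Formula Λ P V V2 → Formula Λ P V V2
  | dia : Λ → V → Formula Λ P V V2 → Formula Λ P V V2
  | mu : V2 → Formula Λ P V V2 → Formula Λ P V V2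
  | repl : (V → V) → Formula Λ P V V2 → Formula Λ P V V2

variable {Λ P V V2 : Type}

/-- Semantics of Lμω : a set of first-order valuations. -/
def sem [DecidableEq V] [DecidableEq V2] (L : LTS Λ P) :
    Formula Λ P V V2 → (V2 → Set (V → L.S)) → Set (V → L.S)
  | .prop p x, _ => {v | p ∈ L.rho (v x)}
  | .svar X, 𝒱 => 𝒱 X
  | .neg φ, 𝒱 => (sem L φ 𝒱)ᶜ
  | .and φ ψ, 𝒱 => sem L φ 𝒱 ∩ sem L ψ 𝒱
  | .dia a x φ, 𝒱 => {v | ∃ s, L.Tr (v x) a s ∧ Function.update v x s ∈ sem L φ 𝒱}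
  | .mu X φ, 𝒱 => ⋂₀ {Q | sem L φ (Function.update 𝒱 X Q) ⊆ Q}
  | .repl κ φ, 𝒱 => {v | (fun z => v (κ z)) ∈ sem L φ 𝒱}

/-- Derived operator: disjunction. -/
def Formula.or (φ ψ : Formula Λ P V V2) : Formula Λ P V V2 := .neg (.and (.neg φ) (.neg ψ))

/-- Derived operator: box modality. -/
def Formula.box (a : Λ) (x : V) (φ : Formula Λ P V V2) : Formula Λ P V V2 :=
  .neg (.dia a x (.neg φ))

/-- Replace every occurrence of the second-order variable `X` by `¬X`. -/
def Formula.substNeg [DecidableEq V2] (X : V2) : Formula Λ P V V2 → Formula Λ P V V2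
  | .prop p x => .prop p x
  | .svar Y => if Y = X then .neg (.svar Y) else .svar Y
  | .neg φ => .neg (φ.substNeg X)
  | .and φ ψ => .and (φ.substNeg X) (ψ.substNeg X)
  | .dia a x φ => .dia a x (φ.substNeg X)
  | .mu Y φ => .mu Y (φ.substNeg X)
  | .repl κ φ => .repl κ (φ.substNeg X)

/-- Derived operator: greatest fixed point, `νX.φ := ¬μX.¬φ[X:=¬X]`. -/
def Formula.nu [DecidableEq V2] (X : V2) (φ : Formula Λ P V V2) : Formula Λ P V V2 :=
  .neg (.mu X (.neg (φ.substNeg X)))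

/-- Falsity, definable as `μX.X`. -/
def Formula.bot (X : V2) : Formula Λ P V V2 := .mu X (.svar X)

/-- Truth. -/
def Formula.top (X : V2) : Formula Λ P V V2 := .neg (.bot X)

/-- Finite conjunction (`X` is a dummy second-order variable for the empty case). -/
def bigAnd (X : V2) (l : List (Formula Λ P V V2)) : Formula Λ P V V2 := l.foldr .and (.top X)

/-- Finite disjunction. -/
def bigOr (X : V2) (l : List (Formula Λ P V V2)) : Formula Λ P V V2 := l.foldr .or (.bot X)

/-- Derived operator: implication. -/
def Formula.imp (φ ψ : Formula Λ P V V2) : Formula Λ P V V2 := .neg (.and φ (.neg ψ))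

/-- Derived operator: bi-implication. -/
def Formula.iff (φ ψ : Formula Λ P V V2) : Formula Λ P V V2 := .and (φ.imp ψ) (ψ.imp φ)

/-- The linear LTS of a finite word `w`: states are the positions `0, …, |w|`, with an
`a`-transition from `i-1` to `i` when the `i`-th letter of `w` is `a`.  Every state is
labeled by the proposition `tag`. -/
def linLTS {Alph P : Type} (w : List Alph) (tag : P) : LTS Alph P where
  S := Fin (w.length + 1)
  s0 := ⟨0, Nat.succ_pos _⟩
  Tr := fun i a j =>
    ∃ h : (i : ℕ) < w.length, w.get ⟨i, h⟩ = a ∧ (j : ℕ) = (i : ℕ) + 1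
  rho := fun _ => {tag}

/-- The disjoint union of the linear LTSs of the words `ws 0, …, ws (m-1)`, every state
of the `i`-th copy being labeled with the proposition `p_i`. -/
def unionLTS {Alph : Type} (m : ℕ) (hm : 0 < m) (ws : Fin m → List Alph) :
    LTS Alph (Fin m) where
  S := (i : Fin m) × Fin ((ws i).length + 1)
  s0 := ⟨⟨0, hm⟩, ⟨0, Nat.succ_pos _⟩⟩
  Tr := fun s a t =>
    ∃ h : s.1 = t.1, ∃ hl : (s.2 : ℕ) < (ws s.1).length,
      (ws s.1).get ⟨s.2, hl⟩ = a ∧ (t.2 : ℕ) = (s.2 : ℕ) + 1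
  rho := fun s => {s.1}

/-- `⟨a⟩_{x_1} … ⟨a⟩_{x_m} φ`. -/
def diaChain {Alph P : Type} (m : ℕ) (a : Alph) (φ : Formula Alph P (Fin m) ℕ) :
    Formula Alph P (Fin m) ℕ :=
  (List.finRange m).foldr (fun i ψ => .dia a i ψ) φ

/-- The body `(⋀_{i=1}^m p_i(x_i)) ∧ ⋁_{a∈Σ} ⟨a⟩_{x_1}…⟨a⟩_{x_m} X` of `φ^m_LCSW`,
with `X` the second-order variable `0`. -/
noncomputable def lcswBody (Alph : Type) [Fintype Alph] (m : ℕ) :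
    Formula Alph (Fin m) (Fin m) ℕ :=
  .and (bigAnd 1 ((List.finRange m).map fun i => .prop i i))
    (bigOr 1 ((Finset.univ : Finset Alph).toList.map fun a => diaChain m a (.svar 0)))

/-- `φ^m_LCSW := νX. (⋀_{i=1}^m p_i(x_i)) ∧ ⋁_{a∈Σ} ⟨a⟩_{x_1}…⟨a⟩_{x_m} X`. -/
noncomputable def lcsw (Alph : Type) [Fintype Alph] (m : ℕ) :
    Formula Alph (Fin m) (Fin m) ℕ :=
  Formula.nu 0 (lcswBody Alph m)

/-- `⟨-⟩_{x_i}^* ψ := μY. ψ ∨ ⋁_{a∈Σ} ⟨a⟩_{x_i} Y` (the second-order variable `Y` used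
for the star at variable `x_i` is `i + 1`). -/
noncomputable def diaStarAt {Alph : Type} [Fintype Alph] {m : ℕ} (i : Fin m)
    (ψ : Formula Alph (Fin m) (Fin m) ℕ) : Formula Alph (Fin m) (Fin m) ℕ :=
  .mu ((i : ℕ) + 1) (.or ψ (bigOr ((i : ℕ) + 1)
    ((Finset.univ : Finset Alph).toList.map fun a => .dia a i (.svar ((i : ℕ) + 1)))))

/-- The body `(⋀_i p_i(x_i)) ∧ ⋁_{a∈Σ} ⟨a⟩_{x_1}⟨-⟩_{x_1}^* … ⟨a⟩_{x_m}⟨-⟩_{x_m}^* X`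
of `φ^m_LCSS`, with `X` the second-order variable `0`. -/
noncomputable def lcssBody (Alph : Type) [Fintype Alph] (m : ℕ) :
    Formula Alph (Fin m) (Fin m) ℕ :=
  .and (bigAnd 0 ((List.finRange m).map fun i => .prop i i))
    (bigOr 0 ((Finset.univ : Finset Alph).toList.map fun a =>
      (List.finRange m).foldr (fun i ψ => .dia a i (diaStarAt i ψ)) (.svar 0)))

/-- The descending fixpoint approximation of `φ^m_LCSS`: `F⁰` is the set of all
valuations, `F^{j+1} = ⟦body⟧^{[X ↦ F^j]}`. -/
noncomputable def lcssIter {Alph : Type} [Fintype Alph] (m : ℕ) (hm : 0 < m)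
    (ws : Fin m → List Alph) : ℕ → Set (Fin m → (unionLTS m hm ws).S)
  | 0 => Set.univ
  | j + 1 => sem (unionLTS m hm ws) (lcssBody Alph m)
      (Function.update (fun _ => (∅ : Set (Fin m → (unionLTS m hm ws).S))) 0
        (lcssIter m hm ws j))

/-!
The star `⟨-⟩*_{x_i}` is a least fixed point of a reachability equation, so it moves `x_i` to
any state reachable from its current one. In a linear LTS, `⟨a⟩_{x_i}⟨-⟩*_{x_i}` therefore reads
the letter `a` at the current position of `x_i` and then jumps to any later position. One
unfolding of the body matches one letter of a common subsequence in all words at once, and by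
induction on `j` the approximant `F^{j+1}` holds at positions `h` exactly when a common
subsequence of length `j + 1` can be matched with its first letter at the positions `h i`.
-/

namespace LTS

variable (L : LTS Λ P)

def Step (s t : L.S) : Prop := ∃ a, L.Tr s a t

def Reach : L.S → L.S → Prop := Relation.ReflTransGen L.Step

/-- The transition relation of `⟨a⟩⟨-⟩*`. -/
def TrReach (a : Λ) (s t : L.S) : Prop := ∃ s', L.Tr s a s' ∧ L.Reach s' t

end LTS

section Semantics

variable [DecidableEq V] [DecidableEq V2] (L : LTS Λ P)

lemma sem_svar (X : V2) (𝒱 : V2 → Set (V → L.S)) :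
    sem L (.svar X : Formula Λ P V V2) 𝒱 = 𝒱 X := rfl

lemma mem_sem_prop (p : P) (x : V) (𝒱 : V2 → Set (V → L.S)) (v : V → L.S) :
    v ∈ sem L (.prop p x : Formula Λ P V V2) 𝒱 ↔ p ∈ L.rho (v x) :=
  Iff.rfl

lemma mem_sem_and (φ ψ : Formula Λ P V V2) (𝒱 : V2 → Set (V → L.S)) (v : V → L.S) :
    v ∈ sem L (.and φ ψ) 𝒱 ↔ v ∈ sem L φ 𝒱 ∧ v ∈ sem L ψ 𝒱 :=
  Iff.rfl

lemma mem_sem_dia (a : Λ) (x : V) (φ : Formula Λ P V V2) (𝒱 : V2 → Set (V → L.S))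
    (v : V → L.S) :
    v ∈ sem L (.dia a x φ) 𝒱 ↔ ∃ s, L.Tr (v x) a s ∧ Function.update v x s ∈ sem L φ 𝒱 :=
  Iff.rfl

lemma mem_sem_mu (X : V2) (φ : Formula Λ P V V2) (𝒱 : V2 → Set (V → L.S)) (v : V → L.S) :
    v ∈ sem L (.mu X φ) 𝒱 ↔ ∀ Q, sem L φ (Function.update 𝒱 X Q) ⊆ Q → v ∈ Q :=
  Set.mem_sInter

lemma sem_or (φ ψ : Formula Λ P V V2) (𝒱 : V2 → Set (V → L.S)) :
    sem L (φ.or ψ) 𝒱 = sem L φ 𝒱 ∪ sem L ψ 𝒱 := by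
  simp [Formula.or, sem, Set.compl_inter]

lemma sem_bot (X : V2) (𝒱 : V2 → Set (V → L.S)) :
    sem L (Formula.bot X : Formula Λ P V V2) 𝒱 = ∅ :=
  Set.subset_empty_iff.mp <| Set.sInter_subset_of_mem <| by simp [sem]

lemma sem_top (X : V2) (𝒱 : V2 → Set (V → L.S)) :
    sem L (Formula.top X : Formula Λ P V V2) 𝒱 = Set.univ := by
  simp [Formula.top, sem, sem_bot]

lemma mem_sem_bigAnd (X : V2) (l : List (Formula Λ P V V2)) (𝒱 : V2 → Set (V → L.S))
    (v : V → L.S) : v ∈ sem L (bigAnd X l) 𝒱 ↔ ∀ φ ∈ l, v ∈ sem L φ 𝒱 := by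
  induction l with
  | nil => simp [bigAnd, sem_top]
  | cons φ l ih => simp_all [bigAnd, sem]

lemma mem_sem_bigOr (X : V2) (l : List (Formula Λ P V V2)) (𝒱 : V2 → Set (V → L.S))
    (v : V → L.S) : v ∈ sem L (bigOr X l) 𝒱 ↔ ∃ φ ∈ l, v ∈ sem L φ 𝒱 := by
  induction l with
  | nil => simp [bigOr, sem_bot]
  | cons φ l ih => simp_all [bigOr, sem_or]

lemma mem_sem_bigOr_dia [Fintype Λ] (Y : V2) (x : V) (φ : Formula Λ P V V2)
    (𝒱 : V2 → Set (V → L.S)) (v : V → L.S) :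
    v ∈ sem L (bigOr Y ((Finset.univ : Finset Λ).toList.map fun a => .dia a x φ)) 𝒱 ↔
      ∃ s, L.Step (v x) s ∧ Function.update v x s ∈ sem L φ 𝒱 := by
  rw [mem_sem_bigOr]
  constructor
  · rintro ⟨_, hφ, hv⟩
    obtain ⟨a, -, rfl⟩ := List.mem_map.mp hφ
    obtain ⟨s, htr, hs⟩ := hv
    exact ⟨s, ⟨a, htr⟩, hs⟩
  · rintro ⟨s, ⟨a, htr⟩, hs⟩
    exact ⟨_, List.mem_map_of_mem (Finset.mem_toList.mpr (Finset.mem_univ a)), s, htr, hs⟩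

end Semantics

section Star

variable {Alph : Type} [Fintype Alph] {m : ℕ} (L : LTS Alph (Fin m))

lemma sem_diaStarAt (i : Fin m) (ψ : Formula Alph (Fin m) (Fin m) ℕ)
    (𝒱 : ℕ → Set (Fin m → L.S))
    (hψ : ∀ Q, sem L ψ (Function.update 𝒱 ((i : ℕ) + 1) Q) = sem L ψ 𝒱) :
    sem L (diaStarAt i ψ) 𝒱 =
      {v | ∃ t, L.Reach (v i) t ∧ Function.update v i t ∈ sem L ψ 𝒱} := by
  have hbody : ∀ Q v, v ∈ sem L (.or ψ (bigOr ((i : ℕ) + 1)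
      ((Finset.univ : Finset Alph).toList.map fun a => .dia a i (.svar ((i : ℕ) + 1)))))
      (Function.update 𝒱 ((i : ℕ) + 1) Q) ↔
        v ∈ sem L ψ 𝒱 ∨ ∃ s, L.Step (v i) s ∧ Function.update v i s ∈ Q := by
    intro Q v
    rw [sem_or, Set.mem_union, hψ, mem_sem_bigOr_dia]
    simp only [sem_svar, Function.update_self]
  ext v
  rw [diaStarAt, mem_sem_mu, Set.mem_ofPred_eq]
  constructor
  · refine fun hv => hv {w | ∃ t, L.Reach (w i) t ∧ Function.update w i t ∈ sem L ψ 𝒱}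
      fun w hw => ?_
    rcases (hbody _ w).mp hw with hψw | ⟨s, hstep, t, hpath, hmem⟩
    · exact ⟨w i, .refl, by rwa [Function.update_eq_self]⟩
    · rw [Function.update_self] at hpath
      rw [Function.update_idem] at hmem
      exact ⟨t, .head hstep hpath, hmem⟩
  · rintro ⟨t, hpath, hmem⟩ Q hQ
    suffices ∀ s, L.Reach s t → Function.update v i s ∈ Q by
      simpa using this (v i) hpath
    intro s hs
    induction hs using Relation.ReflTransGen.head_induction_on with
    | refl => exact hQ ((hbody Q _).mpr (.inl hmem))
    | @head s c hstep _ ih =>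
      refine hQ ((hbody Q _).mpr (.inr ⟨c, ?_, ?_⟩))
      · rwa [Function.update_self]
      · rwa [Function.update_idem]

noncomputable def diaStarChain (a : Alph) (l : List (Fin m)) : Formula Alph (Fin m) (Fin m) ℕ :=
  l.foldr (fun i ψ => .dia a i (diaStarAt i ψ)) (.svar 0)

lemma mem_sem_diaStarChain (a : Alph) (l : List (Fin m)) (hl : l.Nodup)
    (𝒱 : ℕ → Set (Fin m → L.S)) (v : Fin m → L.S) :
    v ∈ sem L (diaStarChain a l) 𝒱 ↔
      ∃ g, (∀ i ∈ l, L.TrReach a (v i) (g i)) ∧ (∀ i ∉ l, g i = v i) ∧ g ∈ 𝒱 0 := by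
  induction l generalizing 𝒱 v with
  | nil =>
    refine ⟨fun hv => ⟨v, by simp, fun _ _ => rfl, hv⟩, fun ⟨g, _, hg, hmem⟩ => ?_⟩
    rwa [funext fun i => hg i List.not_mem_nil] at hmem
  | cons i l ih =>
    obtain ⟨hi, hnd⟩ := List.nodup_cons.mp hl
    -- the inner chain only reads `𝒱 0`, so it ignores the variable bound by the star at `x_i`
    have hindep : ∀ Q, sem L (diaStarChain a l) (Function.update 𝒱 ((i : ℕ) + 1) Q) =
        sem L (diaStarChain a l) 𝒱 := fun Q => by
      ext w
      rw [ih hnd, ih hnd, Function.update_of_ne (by omega)]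
    change v ∈ sem L (.dia a i (diaStarAt i (diaStarChain a l))) 𝒱 ↔ _
    simp only [mem_sem_dia, sem_diaStarAt L i _ 𝒱 hindep, Set.mem_ofPred_eq,
      Function.update_self, Function.update_idem, ih hnd]
    constructor
    · rintro ⟨s, htr, t, hreach, g, hgl, hgout, hg⟩
      refine ⟨g, fun i' hi' => ?_, fun i' hi' => ?_, hg⟩
      · rcases List.mem_cons.mp hi' with rfl | hi'
        · rw [hgout i' hi, Function.update_self]
          exact ⟨s, htr, hreach⟩
        · simpa [Function.update_of_ne (ne_of_mem_of_not_mem hi' hi)] using hgl i' hi'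
      · rw [hgout i' (mt (List.mem_cons_of_mem i) hi'),
          Function.update_of_ne (ne_of_mem_of_not_mem List.mem_cons_self hi').symm]
    · rintro ⟨g, hgl, hgout, hg⟩
      obtain ⟨s, htr, hreach⟩ := hgl i List.mem_cons_self
      refine ⟨s, htr, g i, hreach, g, fun i' hi' => ?_, fun i' hi' => ?_, hg⟩
      · rw [Function.update_of_ne (ne_of_mem_of_not_mem hi' hi)]
        exact hgl i' (List.mem_cons_of_mem _ hi')
      · by_cases hii' : i' = i
        · rw [hii', Function.update_self]
        · rw [Function.update_of_ne hii']
          exact hgout i' (by simp [hii', hi'])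

lemma mem_sem_lcssBody (𝒱 : ℕ → Set (Fin m → L.S)) (v : Fin m → L.S) :
    v ∈ sem L (lcssBody Alph m) 𝒱 ↔
      (∀ i, i ∈ L.rho (v i)) ∧ ∃ a g, (∀ i, L.TrReach a (v i) (g i)) ∧ g ∈ 𝒱 0 := by
  change v ∈ sem L (.and (bigAnd 0 ((List.finRange m).map fun i => .prop i i))
    (bigOr 0 ((Finset.univ : Finset Alph).toList.map fun a =>
      diaStarChain a (List.finRange m)))) 𝒱 ↔ _
  simp [mem_sem_and, mem_sem_bigAnd, mem_sem_bigOr, mem_sem_prop,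
    mem_sem_diaStarChain L _ _ (List.nodup_finRange m)]

end Star

section Subsequence

variable {α : Type*}

/-- `u` is a subsequence of `w` whose first letter is matched at index `k` (0-based, so at
position `k + 1` in the paper's numbering). -/
def SublistAt (u w : List α) (k : ℕ) : Prop :=
  ∃ hk : k < w.length, u.head? = some (w.get ⟨k, hk⟩) ∧ u.tail.Sublist (w.drop (k + 1))

lemma SublistAt.sublist_drop {u w : List α} {k : ℕ} (h : SublistAt u w k) :
    u.Sublist (w.drop k) := by
  obtain ⟨hk, hhead, htail⟩ := h
  cases u with
  | nil => simp at hhead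
  | cons a u =>
    simp only [List.head?_cons, Option.some.injEq, List.get_eq_getElem] at hhead
    rw [List.drop_eq_getElem_cons hk, ← hhead]
    exact htail.cons_cons a

lemma exists_sublistAt_of_sublist_drop {u w : List α} {n : ℕ} (h : u.Sublist (w.drop n))
    (hu : u ≠ []) : ∃ k, n ≤ k ∧ SublistAt u w k := by
  obtain ⟨a, u, rfl⟩ := List.exists_cons_of_ne_nil hu
  have hn : n < w.length := by
    by_contra! hn
    simp [List.drop_of_length_le hn] at h
  rw [List.drop_eq_getElem_cons hn, List.sublist_cons_iff] at h
  rcases h with h | ⟨r, hr, hsub⟩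
  · obtain ⟨k, hk, hs⟩ := exists_sublistAt_of_sublist_drop h hu
    exact ⟨k, by omega, hs⟩
  · obtain ⟨rfl, rfl⟩ := List.cons.inj hr
    exact ⟨n, le_rfl, hn, rfl, hsub⟩
termination_by w.length - n

lemma sublistAt_singleton_iff {a : α} {w : List α} {k : ℕ} :
    SublistAt [a] w k ↔ ∃ hk : k < w.length, w.get ⟨k, hk⟩ = a := by
  simp [SublistAt, eq_comm]

lemma sublistAt_cons_iff {a : α} {u w : List α} {k : ℕ} (hu : u ≠ []) :
    SublistAt (a :: u) w k ↔
      ∃ hk : k < w.length, w.get ⟨k, hk⟩ = a ∧ ∃ k', k + 1 ≤ k' ∧ SublistAt u w k' := by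
  constructor
  · rintro ⟨hk, hhead, htail⟩
    obtain ⟨k', hk', hs⟩ := exists_sublistAt_of_sublist_drop htail hu
    exact ⟨hk, (Option.some.inj hhead).symm, k', hk', hs⟩
  · rintro ⟨hk, hget, k', hk', hs⟩
    exact ⟨hk, congrArg some hget.symm, hs.sublist_drop.trans (List.drop_sublist_drop_left _ hk')⟩

end Subsequence

section UnionLTS

variable {Alph : Type} {m : ℕ} {hm : 0 < m} {ws : Fin m → List Alph}

lemma unionLTS_reach_mk_iff (i : Fin m) (p : Fin ((ws i).length + 1))
    (t : (unionLTS m hm ws).S) :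
    (unionLTS m hm ws).Reach ⟨i, p⟩ t ↔
      ∃ q : Fin ((ws i).length + 1), (p : ℕ) ≤ q ∧ t = ⟨i, q⟩ := by
  constructor
  · intro h
    induction h with
    | refl => exact ⟨p, le_rfl, rfl⟩
    | @tail _ c _ hstep ih =>
      obtain ⟨q, hpq, rfl⟩ := ih
      obtain ⟨c, r⟩ := c
      obtain ⟨_, rfl, -, -, hr⟩ := hstep
      exact ⟨r, by dsimp only at hr; omega, rfl⟩
  · rintro ⟨⟨q, hq⟩, hpq, rfl⟩
    change (p : ℕ) ≤ q at hpq
    induction q, hpq using Nat.le_induction with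
    | base => exact .refl
    | succ q _ ih =>
      exact (ih (by omega)).tail
        ⟨(ws i).get ⟨q, by omega⟩, rfl, show q < (ws i).length by omega, rfl, rfl⟩

lemma unionLTS_trReach_mk_iff (a : Alph) (i : Fin m) (p : Fin ((ws i).length + 1))
    (t : (unionLTS m hm ws).S) :
    (unionLTS m hm ws).TrReach a ⟨i, p⟩ t ↔
      ∃ hp : (p : ℕ) < (ws i).length, (ws i).get ⟨p, hp⟩ = a ∧
        ∃ q : Fin ((ws i).length + 1), (p : ℕ) + 1 ≤ q ∧ t = ⟨i, q⟩ := by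
  constructor
  · rintro ⟨⟨_, s⟩, ⟨rfl, hp, hget, hs⟩, hreach⟩
    obtain ⟨q, hsq, rfl⟩ := (unionLTS_reach_mk_iff _ _ _).mp hreach
    dsimp only at hs
    exact ⟨hp, hget, q, by omega, rfl⟩
  · rintro ⟨hp, hget, q, hq, rfl⟩
    exact ⟨⟨i, ⟨p + 1, by omega⟩⟩, ⟨rfl, hp, hget, rfl⟩,
      (unionLTS_reach_mk_iff _ _ _).mpr ⟨q, hq, rfl⟩⟩

end UnionLTS

section Iteration

variable {Alph : Type} [Fintype Alph] {m : ℕ} {hm : 0 < m} {ws : Fin m → List Alph}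

lemma mem_lcssIter_succ_iff {j : ℕ} (v : Fin m → (unionLTS m hm ws).S) :
    v ∈ lcssIter m hm ws (j + 1) ↔
      (∀ i, (v i).1 = i) ∧
        ∃ a g, (∀ i, (unionLTS m hm ws).TrReach a (v i) (g i)) ∧ g ∈ lcssIter m hm ws j := by
  rw [lcssIter, mem_sem_lcssBody, Function.update_self]
  simp [unionLTS, eq_comm]

lemma exists_eq_mk_of_mem_lcssIter_succ {j : ℕ} {v : Fin m → (unionLTS m hm ws).S}
    (hv : v ∈ lcssIter m hm ws (j + 1)) :
    ∃ h : (i : Fin m) → Fin ((ws i).length + 1), v = fun i => ⟨i, h i⟩ := by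
  have hmk : ∀ i, ∃ q, v i = ⟨i, q⟩ := fun i => by
    rcases hvi : v i with ⟨c, q⟩
    obtain rfl : c = i := by simpa [hvi] using ((mem_lcssIter_succ_iff v).mp hv).1 i
    exact ⟨q, rfl⟩
  choose h hh using hmk
  exact ⟨h, funext hh⟩

lemma mk_mem_lcssIter_succ_iff {j : ℕ} (h : (i : Fin m) → Fin ((ws i).length + 1)) :
    (fun i => ⟨i, h i⟩) ∈ lcssIter m hm ws (j + 1) ↔
      ∃ a, ∃ h' : (i : Fin m) → Fin ((ws i).length + 1),
        (∀ i, ∃ hp : (h i : ℕ) < (ws i).length, (ws i).get ⟨h i, hp⟩ = a ∧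
          (h i : ℕ) + 1 ≤ h' i) ∧
        (fun i => ⟨i, h' i⟩) ∈ lcssIter m hm ws j := by
  refine (mem_lcssIter_succ_iff _).trans ?_
  simp only [unionLTS_trReach_mk_iff, implies_true, true_and]
  constructor
  · rintro ⟨a, g, hg, hmem⟩
    choose hp hget h' hh' hgh' using hg
    rw [funext hgh'] at hmem
    exact ⟨a, h', fun i => ⟨hp i, hget i, hh' i⟩, hmem⟩
  · rintro ⟨a, h', hstep, hmem⟩
    exact ⟨a, _, fun i => ⟨(hstep i).1, (hstep i).2.1, h' i, (hstep i).2.2, rfl⟩, hmem⟩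

theorem mk_mem_lcssIter_succ_iff_exists_sublistAt (j : ℕ)
    (h : (i : Fin m) → Fin ((ws i).length + 1)) :
    (fun i => ⟨i, h i⟩) ∈ lcssIter m hm ws (j + 1) ↔
      ∃ u : List Alph, u.length = j + 1 ∧ ∀ i, SublistAt u (ws i) (h i) := by
  induction j generalizing h with
  | zero =>
    rw [mk_mem_lcssIter_succ_iff]
    constructor
    · rintro ⟨a, _, hstep, -⟩
      exact ⟨[a], rfl, fun i => sublistAt_singleton_iff.mpr ⟨(hstep i).1, (hstep i).2.1⟩⟩
    · rintro ⟨u, hu, hsub⟩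
      obtain ⟨a, rfl⟩ := List.length_eq_one_iff.mp hu
      refine ⟨a, fun i => ⟨h i + 1, by have := (hsub i).1; omega⟩, fun i => ?_, trivial⟩
      obtain ⟨hp, hget⟩ := sublistAt_singleton_iff.mp (hsub i)
      exact ⟨hp, hget, le_rfl⟩
  | succ j ih =>
    simp only [mk_mem_lcssIter_succ_iff (j := j + 1), ih]
    constructor
    · rintro ⟨a, h', hstep, u, hu, hsub⟩
      have hu' : u ≠ [] := List.ne_nil_of_length_pos (by omega)
      refine ⟨a :: u, by simp [hu], fun i => (sublistAt_cons_iff hu').mpr ?_⟩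
      exact ⟨(hstep i).1, (hstep i).2.1, h' i, (hstep i).2.2, hsub i⟩
    · rintro ⟨_ | ⟨a, u⟩, hu, hsub⟩
      · simp at hu
      have hu' : u ≠ [] := List.ne_nil_of_length_pos (by simp at hu; omega)
      choose hp hget k hk hsubk using fun i => (sublistAt_cons_iff hu').mp (hsub i)
      exact ⟨a, fun i => ⟨k i, by have := (hsubk i).1; omega⟩, fun i => ⟨hp i, hget i, hk i⟩,
        u, by simpa using hu, hsubk⟩

end Iteration

/-- for `j ≥ 1`, the valuation placing `x_i` on position `h_i` of
`L_{w_i}` belongs to `F^j` iff there is a word `u` of length `j` which is a common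
subsequence of the suffixes of the `w_i` starting after the positions `h_i`, whose
first letter is taken at position `h_i + 1` in each `w_i`; in particular `F^j` is
nonempty exactly when the `w_i` have a common subsequence of length `j`, so the maximal
`j` with `F^j ≠ ∅` is the length of the longest common subsequence. -/
theorem lcss_iteration {Alph : Type} [Fintype Alph] (m : ℕ) (hm : 0 < m)
    (ws : Fin m → List Alph) (j : ℕ) (hj : 1 ≤ j) :
    (∀ h : (i : Fin m) → Fin ((ws i).length + 1),
      ((fun i => ⟨i, h i⟩) ∈ lcssIter m hm ws j ↔
        ∃ u : List Alph, u.length = j ∧ ∀ i,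
          u.Sublist ((ws i).drop (h i)) ∧
          ∃ hl : (h i : ℕ) < (ws i).length,
            u.head? = some ((ws i).get ⟨h i, hl⟩) ∧
            u.tail.Sublist ((ws i).drop ((h i : ℕ) + 1)))) ∧
    ((lcssIter m hm ws j).Nonempty ↔
      ∃ u : List Alph, u.length = j ∧ ∀ i, u.Sublist (ws i)) := by
  obtain ⟨j, rfl⟩ := Nat.exists_eq_add_of_le' hj
  have hmk := mk_mem_lcssIter_succ_iff_exists_sublistAt (hm := hm) (ws := ws) j
  refine ⟨fun h => (hmk h).trans ?_, ⟨?_, ?_⟩⟩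
  · exact exists_congr fun u => and_congr_right fun _ => forall_congr' fun i =>
      ⟨fun hs => ⟨hs.sublist_drop, hs⟩, And.right⟩
  · rintro ⟨v, hv⟩
    obtain ⟨h, rfl⟩ := exists_eq_mk_of_mem_lcssIter_succ hv
    obtain ⟨u, hu, hsub⟩ := (hmk h).mp hv
    exact ⟨u, hu, fun i => (hsub i).sublist_drop.trans (List.drop_sublist _ _)⟩
  · rintro ⟨u, hu, hsub⟩
    choose k _ hsubk using fun i => exists_sublistAt_of_sublist_drop (n := 0)
      (by simpa using hsub i) (List.ne_nil_of_length_pos (by omega))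
    exact ⟨_, (hmk fun i => ⟨k i, by have := (hsubk i).1; omega⟩).mpr ⟨u, hu, hsubk⟩⟩
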